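/- Let (X,B,μ) be a probability space and T an invertible ergodic measure-preserving transformation. Suppose f is measurable and f = g - g∘T μ-almost everywhere, where g is a measurable function with ∫_X |g|^p dμ < ∞ for some real p > 0. Then for every sequence of positive integers (L_n) with L_n ≥ n^{1/p} for all n and every sequence of integers (v_n), there exists a μ-null set E such that for every x ∉ E, lim_{n→∞} (1/L_n) Σ_{i=1}^{L_n} f(T^{v_n+i} x) = 0. -/

import Mathlib

/-!
Along the orbit of a.e. `x` the coboundary equation telescopes:
`∑_{i<L_n} f(T^{v_n+1+i} x) = g(T^{v_n+1} x) - g(T^{v_n+1+L_n} x)`. Since `T^k` preserves `μ`,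
`μ{|g ∘ T^k| > ε L_n} = μ{|g|^p > ε^p L_n^p} ≤ μ{|g|^p ≥ ε^p n}`, and these tail probabilities are
summable because `|g|^p` is integrable. By Borel–Cantelli, a.e. both endpoint terms are eventually
at most `ε L_n`.
-/

open MeasureTheory Filter Finset
open scoped ENNReal NNReal Topology

lemma tsum_ite_natCast_le_le_add_one (y : ℝ≥0∞) :
    ∑' n : ℕ, (if (n : ℝ≥0∞) ≤ y then 1 else 0 : ℝ≥0∞) ≤ y + 1 := by
  classical
  rcases eq_or_ne y ⊤ with rfl | hy
  · simp
  lift y to ℝ≥0 using hy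
  refine ENNReal.tsum_le_of_sum_range_le fun N => ?_
  have hsub : (range N).filter (fun n : ℕ => (n : ℝ≥0∞) ≤ y) ⊆ range (⌊y⌋₊ + 1) := fun n hn => by
    have : (n : ℝ≥0) ≤ y := by exact_mod_cast (mem_filter.1 hn).2
    exact mem_range.2 (Nat.lt_succ_of_le (Nat.le_floor this))
  rw [sum_boole]
  calc (#((range N).filter (fun n : ℕ => (n : ℝ≥0∞) ≤ y)) : ℝ≥0∞) ≤ (⌊y⌋₊ + 1 : ℕ) := by
        exact_mod_cast card_le_card hsub |>.trans (card_range _).le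
    _ ≤ y + 1 := by
        push_cast
        gcongr
        exact_mod_cast Nat.floor_le y.2

section

variable {X : Type*} [MeasurableSpace X] {μ : Measure X}

lemma tsum_measure_natCast_le_le_lintegral_add {h : X → ℝ≥0∞} (hh : Measurable h) :
    ∑' n : ℕ, μ {x | (n : ℝ≥0∞) ≤ h x} ≤ ∫⁻ x, h x ∂μ + μ Set.univ := by
  have hs : ∀ n : ℕ, MeasurableSet {x | (n : ℝ≥0∞) ≤ h x} := fun n =>
    measurableSet_le measurable_const hh
  calc ∑' n : ℕ, μ {x | (n : ℝ≥0∞) ≤ h x}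
      = ∫⁻ x, ∑' n : ℕ, {x | (n : ℝ≥0∞) ≤ h x}.indicator 1 x ∂μ := by
        rw [lintegral_tsum fun n => (measurable_one.indicator (hs n)).aemeasurable]
        exact tsum_congr fun n => (lintegral_indicator_one (hs n)).symm
    _ ≤ ∫⁻ x, h x + 1 ∂μ := lintegral_mono fun x => by
        simpa [Set.indicator_apply] using tsum_ite_natCast_le_le_add_one (h x)
    _ = ∫⁻ x, h x ∂μ + μ Set.univ := by
        rw [lintegral_add_right _ measurable_const, lintegral_const, one_mul]

lemma measurePreserving_perm_zpow {T : Equiv.Perm X} (hT : MeasurePreserving T μ μ)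
    (hT' : Measurable T.symm) (k : ℤ) : MeasurePreserving ⇑(T ^ k) μ μ := by
  obtain ⟨n, rfl | rfl⟩ := Int.eq_nat_or_neg k
  · rw [zpow_natCast, Equiv.Perm.coe_pow]
    exact hT.iterate n
  · have hinv : MeasurePreserving T.symm μ μ := hT.symm ⟨T, hT.measurable, hT'⟩
    rw [zpow_neg, zpow_natCast, ← inv_pow, Equiv.Perm.coe_pow]
    exact hinv.iterate n

variable [IsFiniteMeasure μ] {S : ℕ → X → X} {g : X → ℝ} {p : ℝ} {L : ℕ → ℝ}

theorem ae_eventually_abs_comp_le_mul (hS : ∀ n, MeasurePreserving (S n) μ μ)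
    (hg : Measurable g) (hp : 0 ≤ p) (hgp : Integrable (fun x => |g x| ^ p) μ)
    (hL0 : ∀ n, 0 ≤ L n) (hL : ∀ n : ℕ, (n : ℝ) ≤ L n ^ p) {ε : ℝ} (hε : 0 < ε) :
    ∀ᵐ x ∂μ, ∀ᶠ n in atTop, |g (S n x)| ≤ ε * L n := by
  set h : X → ℝ≥0∞ := fun x => ENNReal.ofReal (|g x| ^ p / ε ^ p)
  have hsum : ∑' n : ℕ, μ {x | (n : ℝ≥0∞) ≤ h x} ≠ ∞ :=
    ((tsum_measure_natCast_le_le_lintegral_add (by fun_prop)).trans_lt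
      (ENNReal.add_lt_top.2 ⟨(hgp.div_const _).lintegral_lt_top, measure_lt_top _ _⟩)).ne
  have hsub : ∀ n : ℕ, {y | ε * L n < |g y|} ⊆ {x | (n : ℝ≥0∞) ≤ h x} := fun n y hy => by
    have : (n : ℝ) ≤ |g y| ^ p / ε ^ p := by
      rw [le_div_iff₀ (Real.rpow_pos_of_pos hε p)]
      calc (n : ℝ) * ε ^ p ≤ L n ^ p * ε ^ p := by gcongr; exact hL n
        _ = (ε * L n) ^ p := by rw [Real.mul_rpow hε.le (hL0 n), mul_comm]
        _ ≤ |g y| ^ p := Real.rpow_le_rpow (mul_nonneg hε.le (hL0 n)) (le_of_lt hy) hp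
    simpa [h] using ENNReal.ofReal_le_ofReal this
  refine ae_eventually_notMem (s := fun n => S n ⁻¹' {y | ε * L n < |g y|}) ?_ |>.mono
    fun x hx => hx.mono fun n hn => not_lt.1 hn
  refine ne_top_of_le_ne_top hsum (ENNReal.tsum_le_tsum fun n => ?_)
  rw [(hS n).measure_preimage (measurableSet_lt measurable_const hg.abs).nullMeasurableSet]
  exact measure_mono (hsub n)

theorem ae_tendsto_inv_mul_abs_comp (hS : ∀ n, MeasurePreserving (S n) μ μ)
    (hg : Measurable g) (hp : 0 ≤ p) (hgp : Integrable (fun x => |g x| ^ p) μ)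
    (hL0 : ∀ n, 0 ≤ L n) (hL : ∀ n : ℕ, (n : ℝ) ≤ L n ^ p) :
    ∀ᵐ x ∂μ, Tendsto (fun n => (L n)⁻¹ * |g (S n x)|) atTop (𝓝 0) := by
  have hall := ae_all_iff.2 fun m : ℕ =>
    ae_eventually_abs_comp_le_mul hS hg hp hgp hL0 hL (Nat.one_div_pos_of_nat (n := m))
  filter_upwards [hall] with x hx
  rw [NormedAddGroup.tendsto_nhds_zero]
  intro δ hδ
  obtain ⟨m, hm⟩ := exists_nat_one_div_lt hδ
  filter_upwards [hx m] with n hn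
  rw [Real.norm_eq_abs, abs_of_nonneg (mul_nonneg (inv_nonneg.2 (hL0 n)) (abs_nonneg _))]
  calc (L n)⁻¹ * |g (S n x)| ≤ (L n)⁻¹ * (1 / (m + 1) * L n) :=
        mul_le_mul_of_nonneg_left hn (inv_nonneg.2 (hL0 n))
    _ = 1 / (m + 1) * (L n * (L n)⁻¹) := by ring
    _ ≤ 1 / (m + 1) := mul_le_of_le_one_right (by positivity) mul_inv_le_one
    _ < δ := hm

end

lemma sum_range_comp_zpow_eq_sub {X : Type*} {T : Equiv.Perm X} {f g : X → ℝ} {x : X}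
    (h : ∀ k : ℤ, f ((T ^ k) x) = g ((T ^ k) x) - g (T ((T ^ k) x))) (a : ℤ) (N : ℕ) :
    ∑ i ∈ range N, f ((T ^ (a + i)) x) = g ((T ^ a) x) - g ((T ^ (a + N)) x) := by
  have hstep : ∀ k : ℤ, T ((T ^ k) x) = (T ^ (k + 1)) x := fun k => by
    rw [add_comm, zpow_one_add, Equiv.Perm.mul_apply]
  simp_rw [h, hstep, add_assoc, ← Nat.cast_add_one]
  simpa using sum_range_sub' (fun i : ℕ => g ((T ^ (a + i)) x)) N

theorem stmt15_general
    {X : Type*} [MeasurableSpace X] (μ : Measure X) [IsProbabilityMeasure μ]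
    (T : Equiv.Perm X) (hT' : Measurable (⇑T.symm))
    (hTerg : Ergodic (⇑T) μ)
    (f g : X → ℝ) (hgm : Measurable g)
    (p : ℝ) (hp : 0 < p)
    (hgp : Integrable (fun x => |g x| ^ p) μ)
    (hcob : f =ᵐ[μ] fun x => g x - g (T x))
    (L : ℕ → ℕ) (hLn : ∀ n : ℕ, (n : ℝ) ^ (1 / p) ≤ (L n : ℝ))
    (v : ℕ → ℤ) :
    ∃ E : Set X, μ E = 0 ∧ ∀ x ∉ E,
      Tendsto (fun n : ℕ =>
          ((L n : ℝ))⁻¹ * ∑ i ∈ Finset.range (L n), f ((T ^ (v n + 1 + (i : ℤ))) x))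
        atTop (nhds 0) := by
  have hMP := measurePreserving_perm_zpow hTerg.toMeasurePreserving hT'
  have hL : ∀ n : ℕ, (n : ℝ) ≤ (L n : ℝ) ^ p := fun n =>
    (Real.rpow_inv_le_iff_of_pos n.cast_nonneg (L n).cast_nonneg hp).1 (one_div p ▸ hLn n)
  have hcob_orbit : ∀ᵐ x ∂μ, ∀ k : ℤ, f ((T ^ k) x) = g ((T ^ k) x) - g (T ((T ^ k) x)) :=
    ae_all_iff.2 fun k => (hMP k).quasiMeasurePreserving.ae hcob
  have hstart := ae_tendsto_inv_mul_abs_comp (fun n => hMP (v n + 1)) hgm hp.le hgp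
    (fun n => (L n).cast_nonneg) hL
  have hend := ae_tendsto_inv_mul_abs_comp (fun n => hMP (v n + 1 + L n)) hgm hp.le hgp
    (fun n => (L n).cast_nonneg) hL
  have hconv : ∀ᵐ x ∂μ, Tendsto (fun n : ℕ =>
      ((L n : ℝ))⁻¹ * ∑ i ∈ Finset.range (L n), f ((T ^ (v n + 1 + (i : ℤ))) x))
        atTop (nhds 0) := by
    filter_upwards [hcob_orbit, hstart, hend] with x hx hx_start hx_end
    refine squeeze_zero_norm (fun n => ?_) (by simpa using hx_start.add hx_end)
    rw [sum_range_comp_zpow_eq_sub hx, norm_mul, norm_inv, Real.norm_natCast, ← mul_add]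
    exact mul_le_mul_of_nonneg_left (abs_sub _ _) (by positivity)
  exact ⟨_, ae_iff.1 hconv, fun x hx => not_not.1 hx⟩

/-- If `f = g - g∘T` a.e. with `∫ |g|^p dμ < ∞` for some real `p > 0`, `T` invertible
ergodic measure-preserving, then for every sequence of positive integers `(L_n)` with
`L_n ≥ n^{1/p}` and every sequence of integers `(v_n)`, there is a null set `E` off of
which `(1/L_n) ∑_{i=1}^{L_n} f(T^{v_n+i} x) → 0`. -/
theorem stmt15
    {X : Type*} [MeasurableSpace X] (μ : Measure X) [IsProbabilityMeasure μ]
    (T : Equiv.Perm X) (hT : Measurable (⇑T)) (hT' : Measurable (⇑T.symm))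
    (hTerg : Ergodic (⇑T) μ)
    (f g : X → ℝ) (hfm : Measurable f) (hgm : Measurable g)
    (p : ℝ) (hp : 0 < p)
    (hgp : Integrable (fun x => |g x| ^ p) μ)
    (hcob : f =ᵐ[μ] fun x => g x - g (T x))
    (L : ℕ → ℕ) (hL : ∀ n, 0 < L n) (hLn : ∀ n : ℕ, (n : ℝ) ^ (1 / p) ≤ (L n : ℝ))
    (v : ℕ → ℤ) :
    ∃ E : Set X, μ E = 0 ∧ ∀ x ∉ E,
      Tendsto (fun n : ℕ =>
          ((L n : ℝ))⁻¹ * ∑ i ∈ Finset.range (L n), f ((T ^ (v n + 1 + (i : ℤ))) x))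
        atTop (nhds 0) :=
  stmt15_general μ T hT' hTerg f g hgm p hp hgp hcob L hLn v
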